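/- The ν-graph G(ν) has exactly |I ∪ J| − 1 edges. -/

import Mathlib

namespace FP

/-- The three possible types of an edge `(i,j)` with `i < j`. -/
inductive EdgeType : Type
  | forward
  | backward
  | bidirectional
  deriving DecidableEq

/-- An edge is a pair of endpoints `(i,j)` (with the convention `i < j`
for well-formed graphs) together with its type. -/
abbrev GEdge : Type := ℕ × ℕ × EdgeType

/-- A directed multigraph given by a list of edges, together with a
distinguished source and sink vertex. -/
structure LGraph : Type where
  edges : List GEdge
  src : ℕ
  snk : ℕ

namespace LGraph

/-- The number of edges. -/
def m (G : LGraph) : ℕ := G.edges.length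

/-- The smaller endpoint of the `e`-th edge. -/
def tail (G : LGraph) (e : Fin G.m) : ℕ := (G.edges.get e).1

/-- The larger endpoint of the `e`-th edge. -/
def head (G : LGraph) (e : Fin G.m) : ℕ := (G.edges.get e).2.1

/-- The type of the `e`-th edge. -/
def etype (G : LGraph) (e : Fin G.m) : EdgeType := (G.edges.get e).2.2

/-- Wellformedness: the graph has vertex set `{1,…,n}` and each edge `(i,j)`
satisfies `i < j`. -/
def WF (G : LGraph) (n : ℕ) : Prop := ∀ e ∈ G.edges, 1 ≤ e.1 ∧ e.1 < e.2.1 ∧ e.2.1 ≤ n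

/-- The netflow of `x` at the vertex `v`: total flow on edges `(v,k)`, `v < k`,
minus the total flow on edges `(i,v)`, `i < v`. -/
noncomputable def netflow (G : LGraph) (x : Fin G.m → ℝ) (v : ℕ) : ℝ :=
  ∑ e : Fin G.m, ((if G.tail e = v then x e else 0) - (if G.head e = v then x e else 0))

/-- The set of `u`-flows on `G`, where `u = e_src - e_snk`: the netflow is `1` at the
source, `-1` at the sink and `0` elsewhere, flows on forward edges are nonnegative and
flows on backward edges are nonpositive (bidirectional edges unrestricted).  This is
the flow polytope `F_G ⊆ ℝ^m`. -/
def flowSet (G : LGraph) : Set (Fin G.m → ℝ) :=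
  { x | (∀ v : ℕ, G.netflow x v = (if v = G.src then (1 : ℝ) else 0) - (if v = G.snk then 1 else 0))
      ∧ ∀ e : Fin G.m, (G.etype e = .forward → 0 ≤ x e) ∧ (G.etype e = .backward → x e ≤ 0) }

/-- One step of a directed walk: forward edges can be traversed from the smaller to the
larger endpoint, backward edges from the larger to the smaller, bidirectional edges both
ways. -/
def DStep (G : LGraph) (a b : ℕ) : Prop :=
  ∃ e : Fin G.m, (G.tail e = a ∧ G.head e = b ∧ G.etype e ≠ .backward) ∨
                 (G.head e = a ∧ G.tail e = b ∧ G.etype e ≠ .forward)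

/-- `G` is acyclic if it has no directed cycle. -/
def Acyclic (G : LGraph) : Prop := ∀ v : ℕ, ¬ Relation.TransGen G.DStep v v

/-- One step in the underlying undirected graph. -/
def UStep (G : LGraph) (a b : ℕ) : Prop :=
  ∃ e : Fin G.m, (G.tail e = a ∧ G.head e = b) ∨ (G.head e = a ∧ G.tail e = b)

/-- `G` is connected (as an undirected graph on the vertex set `{1,…,n}`). -/
def Connected (G : LGraph) (n : ℕ) : Prop :=
  ∀ a b : ℕ, 1 ≤ a → a ≤ n → 1 ≤ b → b ≤ n → Relation.ReflTransGen G.UStep a b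

/-- The starting vertex of a traversal step `(e, d)`: `d = true` means the edge `e` is
traversed from its smaller to its larger endpoint. -/
def sv (G : LGraph) (s : Fin G.m × Bool) : ℕ := if s.2 then G.tail s.1 else G.head s.1

/-- The ending vertex of a traversal step. -/
def ev (G : LGraph) (s : Fin G.m × Bool) : ℕ := if s.2 then G.head s.1 else G.tail s.1

/-- A route of `G`: a directed path from the source to the sink (not repeating edges),
traversing each edge in a direction allowed by its type. -/
structure Route (G : LGraph) : Type where
  steps : List (Fin G.m × Bool)
  ne : steps ≠ []
  chain : steps.Chain' (fun s t => G.ev s = G.sv t)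
  first : G.sv (steps.head ne) = G.src
  last : G.ev (steps.getLast ne) = G.snk
  dir : ∀ s ∈ steps, (s.2 = true → G.etype s.1 ≠ .backward) ∧ (s.2 = false → G.etype s.1 ≠ .forward)
  nodup : (steps.map Prod.fst).Nodup

/-- The signed characteristic vector of a route: `+1` on edges traversed from smaller to
larger endpoint, `-1` on edges traversed from larger to smaller endpoint, `0` on unused
edges. -/
noncomputable def Route.vec {G : LGraph} (R : Route G) : Fin G.m → ℝ := fun e =>
  if (e, true) ∈ R.steps then 1 else if (e, false) ∈ R.steps then -1 else 0

end LGraph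

/-- A point of `ℝ^α` is a lattice point if all its coordinates are integers. -/
def IsLatticePt {α : Type*} (x : α → ℝ) : Prop := ∀ i, ∃ z : ℤ, x i = (z : ℝ)

/-- Integral equivalence of two subsets `P ⊆ ℝ^α`, `Q ⊆ ℝ^β`: an affine map `φ` restricting
to a bijection from `P` onto `Q` and to a bijection between the lattice points of the
affine hull of `P` and those of the affine hull of `Q`. -/
def IntEquiv {α β : Type*} (P : Set (α → ℝ)) (Q : Set (β → ℝ)) : Prop :=
  ∃ φ : (α → ℝ) →ᵃ[ℝ] (β → ℝ),
    Set.BijOn φ P Q ∧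
    Set.BijOn φ ({x | IsLatticePt x} ∩ (affineSpan ℝ P : Set (α → ℝ)))
                ({x | IsLatticePt x} ∩ (affineSpan ℝ Q : Set (β → ℝ)))

/-! ### Lattice paths and the canonical indexing -/

/-- A lattice path is a list of letters, `true` = E-step `(1,0)`, `false` = N-step `(0,1)`.
`ovl ν` is the path `ν̄ = E ν N`. -/
def ovl (ν : List Bool) : List Bool := true :: ν ++ [false]

/-- Auxiliary function for the canonical indexing: `prev` is the previous letter,
`k` is the last index used. -/
def canonIdxAux : List Bool → Bool → ℕ → List ℕ
  | [], _, _ => []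
  | c :: rest, prev, k =>
    if prev && !c then k :: canonIdxAux rest c k
    else (k + 1) :: canonIdxAux rest c (k + 1)

/-- The canonical indexing of a word in `{E,N}`: reading left to right, each letter
receives the next positive integer, except that the first `N` of a maximal run of `N`s
receives the index of the immediately preceding `E` step. -/
def canonIdx (w : List Bool) : List ℕ := canonIdxAux w false 0

/-- The letter at position `p` (`true` = E). -/
def letterAt (w : List Bool) (p : ℕ) : Bool := w.getD p false

/-- The canonical index of the letter at position `p`. -/
def idxAt (w : List Bool) (p : ℕ) : ℕ := (canonIdx w).getD p 0

/-- The largest canonical index `n` of the word `w`. -/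
def nIdx (w : List Bool) : ℕ := idxAt w (w.length - 1)

/-- The set `I` of indices of E steps. -/
def Iset (w : List Bool) : Finset ℕ :=
  (((List.range w.length).filter (fun p => letterAt w p)).map (idxAt w)).toFinset

/-- The set `J` of indices of N steps. -/
def Jset (w : List Bool) : Finset ℕ :=
  (((List.range w.length).filter (fun p => !letterAt w p)).map (idxAt w)).toFinset

/-- The set `I ∩ J` of indices of valleys. -/
def Vset (w : List Bool) : Finset ℕ := Iset w ∩ Jset w

/-- The valleys `v_1 < v_2 < ⋯ < v_w` as a sorted list. -/
def valleyList (w : List Bool) : List ℕ := (Vset w).sort (· ≤ ·)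

/-- The number `w` of valleys. -/
def numVal (w : List Bool) : ℕ := (valleyList w).length

/-- The `k`-th valley `v_k` (`1 ≤ k ≤ numVal w`). -/
def vv (w : List Bool) (k : ℕ) : ℕ := (valleyList w).getD (k - 1) 0

/-! ### The ν-graph, its bidirectional version and partial augmentations -/

/-- `(i,j)` is an edge of the ν-graph iff `E_i ⋯ N_j` is a consecutive subword of `w`
whose only valleys are `E_k N_k` with `k = i` or `k = j`. -/
def isNuEdgeB (w : List Bool) (i j : ℕ) : Bool :=
  (List.range w.length).any fun p =>
    (List.range w.length).any fun q =>
      decide (p < q) && letterAt w p && !letterAt w q &&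
      decide (idxAt w p = i) && decide (idxAt w q = j) &&
      ((List.range w.length).all fun r =>
        !(decide (p ≤ r) && decide (r + 1 ≤ q) && letterAt w r && !letterAt w (r + 1)) ||
        decide (idxAt w r = i) || decide (idxAt w r = j))

/-- The list of edges `(i,j)`, `i < j`, of the ν-graph `G(ν)` (where `w = ν̄`). -/
def nuEdgePairs (w : List Bool) : List (ℕ × ℕ) :=
  ((List.range (nIdx w + 1)).flatMap fun i =>
    (List.range (nIdx w + 1)).map fun j => (i, j)).filter
    fun p => decide (p.1 < p.2) && isNuEdgeB w p.1 p.2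

/-- The edges of `G(ν)`, all forward. -/
def Gedges (w : List Bool) : List GEdge :=
  (nuEdgePairs w).map fun p => (p.1, p.2, EdgeType.forward)

/-- The edges of the bidirectional ν-graph `G_B(ν)`: an edge is bidirectional exactly
when both of its endpoints lie in `I ∩ J`. -/
def GBedges (w : List Bool) : List GEdge :=
  (nuEdgePairs w).map fun p =>
    (p.1, p.2, if p.1 ∈ Vset w ∧ p.2 ∈ Vset w then EdgeType.bidirectional else EdgeType.forward)

/-- Out-degree of a vertex in an edge list: the number of edges traversable out of `v`. -/
def outDegL (E : List GEdge) (v : ℕ) : ℕ :=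
  (E.filter fun e => (decide (e.1 = v) && decide (e.2.2 ≠ EdgeType.backward)) ||
                     (decide (e.2.1 = v) && decide (e.2.2 ≠ EdgeType.forward))).length

/-- In-degree of a vertex in an edge list: the number of edges traversable into `v`. -/
def inDegL (E : List GEdge) (v : ℕ) : ℕ :=
  (E.filter fun e => (decide (e.2.1 = v) && decide (e.2.2 ≠ EdgeType.backward)) ||
                     (decide (e.1 = v) && decide (e.2.2 ≠ EdgeType.forward))).length

/-- The full augmentation of an edge list on inner vertices `1,…,n`: add a source `s = 0`
and a sink `t = n+1` together with forward edges `(s,i)` and `(i,t)` for all `i`. -/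
def fullAug (n : ℕ) (E : List GEdge) : List GEdge :=
  E ++ ((List.range n).map fun i => (0, i + 1, EdgeType.forward))
    ++ ((List.range n).map fun i => (i + 1, n + 1, EdgeType.forward))

/-- The partial augmentation: the full augmentation with the edges `(s,i)` for which `i`
has out-degree one, and the edges `(j,t)` for which `j` has in-degree one, removed. -/
def partAug (n : ℕ) (E : List GEdge) : List GEdge :=
  E ++ ((List.range n).filterMap fun i =>
          if outDegL (fullAug n E) (i + 1) = 1 then none else some (0, i + 1, EdgeType.forward))
    ++ ((List.range n).filterMap fun j =>
          if inDegL (fullAug n E) (j + 1) = 1 then none else some (j + 1, n + 1, EdgeType.forward))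

/-- The graph `G̃_B(ν)`: the partial augmentation of the bidirectional ν-graph, with
source `s = 0` and sink `t = n+1`. -/
def GBt (w : List Bool) : LGraph := ⟨partAug (nIdx w) (GBedges w), 0, nIdx w + 1⟩

/-- The graph `G̃(ν)`: the partial augmentation of the ν-graph. -/
def Gt (w : List Bool) : LGraph := ⟨partAug (nIdx w) (Gedges w), 0, nIdx w + 1⟩

/-- The edges of the graph `G(ν,k)`: the bidirectional path of `G_B(ν)` is replaced by
`C_ν(k)`, i.e. all edges are made forward, the forward edge `(v_k, v_{k+1})` is removed
and the backward edge `(v_1, v_w)` is added when `k < w` (for `k = w` nothing changes). -/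
def GnuIedges (w : List Bool) (k : ℕ) : List GEdge :=
  ((nuEdgePairs w).filterMap fun p =>
    if k < numVal w ∧ p = (vv w k, vv w (k + 1)) then none
    else some (p.1, p.2, EdgeType.forward))
  ++ (if k < numVal w then [(vv w 1, vv w (numVal w), EdgeType.backward)] else [])

/-- The graph `G̃(ν,k)`: the partial augmentation of `G(ν,k)`. -/
def Gnut (w : List Bool) (k : ℕ) : LGraph := ⟨partAug (nIdx w) (GnuIedges w k), 0, nIdx w + 1⟩

/-- All candidate edges on the vertex set `{0,1,…,n+1}`. -/
def allCand (n : ℕ) : List GEdge :=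
  (List.range (n + 2)).flatMap fun a =>
    (List.range (n + 2)).flatMap fun b =>
      [(a, b, EdgeType.forward), (a, b, EdgeType.backward), (a, b, EdgeType.bidirectional)]

/-- The intersection `∩_{k ∈ S} G̃(ν,k)` of the partial augmentations of the graphs
`G(ν,k)`, `k ∈ S`, as a graph with source `0` and sink `n+1`. -/
def interGraph (w : List Bool) (S : Finset ℕ) : LGraph :=
  ⟨(allCand (nIdx w)).filter fun e =>
      decide (∀ k ∈ S, e ∈ partAug (nIdx w) (GnuIedges w k)), 0, nIdx w + 1⟩

/-! ### The polytopes `Q_i` -/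

/-- The condition on a route of `G̃_B(ν)` defining `Q_k` (`1 ≤ k < w`): the route does not
traverse the bidirectional edge `(v_k, v_{k+1})` forward, and traverses it backward
whenever it traverses any bidirectional edge backward. -/
def QRoute (w : List Bool) (k : ℕ) (R : LGraph.Route (GBt w)) : Prop :=
  (∀ e : Fin (GBt w).m, (GBt w).tail e = vv w k → (GBt w).head e = vv w (k + 1) →
      (e, true) ∉ R.steps) ∧
  ((∃ s ∈ R.steps, s.2 = false) →
      ∃ e : Fin (GBt w).m, (GBt w).tail e = vv w k ∧ (GBt w).head e = vv w (k + 1) ∧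
        (e, false) ∈ R.steps)

/-- The polytope `Q_k` for `1 ≤ k ≤ w`.  For `k < w` it is the convex hull of the signed
characteristic vectors of the routes satisfying `QRoute`, and `Q_w` is the flow polytope
`F_{G̃(ν)}` viewed inside `F_{G̃_B(ν)}` (the nonnegative flows). -/
def Qset (w : List Bool) (k : ℕ) : Set (Fin (GBt w).m → ℝ) :=
  if k = numVal w then { x ∈ (GBt w).flowSet | ∀ e, 0 ≤ x e }
  else convexHull ℝ { x | ∃ R : LGraph.Route (GBt w), QRoute w k R ∧ x = R.vec }

/-! ### Products of simplices -/

/-- The `i`-th standard basis vector. -/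
def stdBasisVec {α : Type*} [DecidableEq α] (i : α) : α → ℝ := fun k => if k = i then 1 else 0

/-- The product of simplices `Δ_a × Δ_b = conv{(e_i, e_j)} ⊆ ℝ^{a+1} × ℝ^{b+1}`. -/
def prodSimplices (a b : ℕ) : Set ((Fin (a + 1) ⊕ Fin (b + 1)) → ℝ) :=
  convexHull ℝ { x | ∃ (i : Fin (a + 1)) (j : Fin (b + 1)),
    x = Sum.elim (stdBasisVec i) (stdBasisVec j) }

/-! ### Arcs and (I,J)-trees -/

/-- An arc on `w`: a pair `(i,j)` with `i ∈ I` and `j ∈ J`. -/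
def IsArc (w : List Bool) (p : ℕ × ℕ) : Prop := p.1 ∈ Iset w ∧ p.2 ∈ Jset w

/-- The six configurations in which the arcs `(i,j) = p` and `(i',j') = q` cyclically
cross. -/
def CycCrossRaw (p q : ℕ × ℕ) : Prop :=
  (p.1 < q.1 ∧ q.1 < p.2 ∧ p.2 < q.2) ∨   -- i < i' < j < j'
  (q.2 < p.1 ∧ p.1 < q.1 ∧ q.1 < p.2) ∨   -- j' < i < i' < j
  (p.2 < q.2 ∧ q.2 < p.1 ∧ p.1 < q.1) ∨   -- j < j' < i < i'
  (q.1 < p.2 ∧ p.2 < q.2 ∧ q.2 < p.1) ∨   -- i' < j < j' < i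
  (p.1 < q.2 ∧ q.2 < q.1 ∧ q.1 < p.2) ∨   -- i < j' < i' < j
  (p.2 < p.1 ∧ p.1 < q.2 ∧ q.2 < q.1)     -- j < i < j' < i'

/-- Two arcs cyclically cross (up to swapping the roles of the two arcs). -/
def CycCross (p q : ℕ × ℕ) : Prop := CycCrossRaw p q ∨ CycCrossRaw q p

/-- A cyclic (I,J)-forest: a set of pairwise cyclically non-crossing arcs. -/
def CycForest (w : List Bool) (F : Set (ℕ × ℕ)) : Prop :=
  (∀ p ∈ F, IsArc w p) ∧ ∀ p ∈ F, ∀ q ∈ F, p ≠ q → ¬ CycCross p q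

/-- A cyclic (I,J)-tree: a maximal cyclic (I,J)-forest. -/
def CycTree (w : List Bool) (T : Set (ℕ × ℕ)) : Prop :=
  CycForest w T ∧ ∀ T', CycForest w T' → T ⊆ T' → T' = T

/-- An increasing (I,J)-forest: a cyclic (I,J)-forest all of whose arcs are increasing
or minimal. -/
def IncForest (w : List Bool) (F : Set (ℕ × ℕ)) : Prop :=
  CycForest w F ∧ ∀ p ∈ F, p.1 ≤ p.2

/-- An increasing (I,J)-tree: a maximal increasing (I,J)-forest. -/
def IncTree (w : List Bool) (T : Set (ℕ × ℕ)) : Prop :=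
  IncForest w T ∧ ∀ T', IncForest w T' → T ⊆ T' → T' = T

/-- Two edges `(a,b)` and `(c,d)` with `a < b`, `c < d` cross if `a < c < b < d` or
`c < a < d < b`. -/
def CrossE (p q : ℕ × ℕ) : Prop :=
  (p.1 < q.1 ∧ q.1 < p.2 ∧ p.2 < q.2) ∨ (q.1 < p.1 ∧ p.1 < q.2 ∧ q.2 < p.2)

/-- A graph on `I ∪ J` whose edges `(i,j)` satisfy `i ∈ I`, `j ∈ J`, `i < j`, which is
alternating (every vertex is a source or a sink) and non-crossing. -/
def AltNC (w : List Bool) (H : Set (ℕ × ℕ)) : Prop :=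
  (∀ p ∈ H, p.1 ∈ Iset w ∧ p.2 ∈ Jset w ∧ p.1 < p.2) ∧
  (∀ v : ℕ, (∀ p ∈ H, p.2 ≠ v) ∨ (∀ p ∈ H, p.1 ≠ v)) ∧
  (∀ p ∈ H, ∀ q ∈ H, p ≠ q → ¬ CrossE p q)

/-- The set `D_ν̄`: maximal alternating non-crossing graphs. -/
def Dnu (w : List Bool) (H : Set (ℕ × ℕ)) : Prop :=
  AltNC w H ∧ ∀ H', AltNC w H' → H ⊆ H' → H' = H

/-- A maximal arc: `(1,n)`, or an arc `(i,j)` with `j < i` and no index strictly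
between `j` and `i`. -/
def MaxArc (w : List Bool) (p : ℕ × ℕ) : Prop :=
  (p.1 = 1 ∧ p.2 = nIdx w) ∨
  (p.2 < p.1 ∧ ∀ k ∈ Iset w ∪ Jset w, ¬ (p.2 < k ∧ k < p.1))

/-! ### Cyclic peaks and rotations -/

/-- The positions `r` of the (non-wrap-around) cyclic peaks: `N` at `r` and `E` at `r+1`. -/
def peakPositions (w : List Bool) : List ℕ :=
  (List.range w.length).filter fun r => !letterAt w r && letterAt w (r + 1)

/-- The position of the `E` step of the `l`-th cyclic peak (`1 ≤ l ≤ w`); the `w`-th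
cyclic peak is the wrap-around peak, whose `E` step is at position `0`. -/
def shiftPos (w : List Bool) (l : ℕ) : ℕ :=
  if l = numVal w then 0 else (peakPositions w).getD (l - 1) 0 + 1

/-- The word `ν̄(l)` obtained by cyclically shifting `w = ν̄` to start at the `E` step of
the `l`-th cyclic peak. -/
def rotWord (w : List Bool) (l : ℕ) : List Bool :=
  w.drop (shiftPos w l) ++ w.take (shiftPos w l)

/-- The effect of the rotation on positions. -/
def rotPos (w : List Bool) (l : ℕ) (p : ℕ) : ℕ :=
  (p + w.length - shiftPos w l) % w.length

/-- The position of the `E` step with index `i`. -/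
def Epos (w : List Bool) (i : ℕ) : ℕ :=
  (((List.range w.length).filter fun p => letterAt w p && decide (idxAt w p = i))).headD 0

/-- The position of the `N` step with index `j`. -/
def Npos (w : List Bool) (j : ℕ) : ℕ :=
  (((List.range w.length).filter fun p => !letterAt w p && decide (idxAt w p = j))).headD 0

/-- The map induced on arcs by the cyclic rotation taking `ν̄` to `ν̄(l)`. -/
def arcMap (w : List Bool) (l : ℕ) (p : ℕ × ℕ) : ℕ × ℕ :=
  (idxAt (rotWord w l) (rotPos w l (Epos w p.1)),
   idxAt (rotWord w l) (rotPos w l (Npos w p.2)))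

/-- The arc determined by the `l`-th cyclic peak. -/
def peakArc (w : List Bool) (l : ℕ) : ℕ × ℕ :=
  if l = numVal w then (1, nIdx w)
  else (idxAt w ((peakPositions w).getD (l - 1) 0 + 1), idxAt w ((peakPositions w).getD (l - 1) 0))

/-!
An edge `(i, j)` of `G(ν)` is a pair `i ∈ I`, `j ∈ J`, `i < j`, with no valley strictly between.
If `i` is a valley, it is the last valley before `j`; otherwise `j` is forced to be the first
valley after `i`. So, with `v₁` the first valley, edges correspond to `J \ {v₁}` and to `I \ J`
respectively, which together have `|J| - 1 + |I \ J| = |I ∪ J| - 1` elements.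
-/

section GapPairs

variable {α : Type*} [LinearOrder α] {I J : Finset α}

/-- For `I`, `J` the `E`- and `N`-indices of `ν̄`, this is the edge set of `G(ν)`. -/
def gapPairs (I J : Finset α) : Finset (α × α) :=
  (I ×ˢ J).filter fun a => a.1 < a.2 ∧ ∀ v ∈ I ∩ J, ¬(a.1 < v ∧ v < a.2)

lemma mem_gapPairs {a : α × α} :
    a ∈ gapPairs I J ↔ a.1 ∈ I ∧ a.2 ∈ J ∧ a.1 < a.2 ∧ ∀ v ∈ I ∩ J, ¬(a.1 < v ∧ v < a.2) := by
  simp only [gapPairs, Finset.mem_filter, Finset.mem_product, and_assoc]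

lemma gapPairs_fst_eq {a b : α × α} (ha : a ∈ gapPairs I J) (hb : b ∈ gapPairs I J)
    (haV : a.1 ∈ I ∩ J) (hbV : b.1 ∈ I ∩ J) (h : a.2 = b.2) : a.1 = b.1 := by
  have ha := (mem_gapPairs.mp ha).2.2
  have hb := (mem_gapPairs.mp hb).2.2
  exact le_antisymm (not_lt.mp fun hlt => hb.2 _ haV ⟨hlt, h ▸ ha.1⟩)
    (not_lt.mp fun hlt => ha.2 _ hbV ⟨hlt, h ▸ hb.1⟩)

lemma gapPairs_snd_eq {a b : α × α} (ha : a ∈ gapPairs I J) (hb : b ∈ gapPairs I J)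
    (haV : a.2 ∈ I ∩ J) (hbV : b.2 ∈ I ∩ J) (h : a.1 = b.1) : a.2 = b.2 := by
  have ha := (mem_gapPairs.mp ha).2.2
  have hb := (mem_gapPairs.mp hb).2.2
  exact le_antisymm (not_lt.mp fun hlt => ha.2 _ hbV ⟨h ▸ hb.1, hlt⟩)
    (not_lt.mp fun hlt => hb.2 _ haV ⟨h ▸ ha.1, hlt⟩)

lemma snd_mem_of_fst_not_mem
    (hIJ : ∀ i ∈ I, ∀ j ∈ J, i < j → ∃ v ∈ I ∩ J, i ≤ v ∧ v ≤ j)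
    {a : α × α} (ha : a ∈ gapPairs I J) (haV : a.1 ∉ I ∩ J) : a.2 ∈ I ∩ J := by
  obtain ⟨hi, hj, hlt, hgap⟩ := mem_gapPairs.mp ha
  obtain ⟨v, hv, hiv, hvj⟩ := hIJ _ hi _ hj hlt
  have hiv : a.1 < v := lt_of_le_of_ne hiv fun h => haV (h ▸ hv)
  have hvj : v = a.2 := by_contra fun h => hgap v hv ⟨hiv, lt_of_le_of_ne hvj h⟩
  exact hvj ▸ hv

lemma card_gapPairs_filter_fst_mem (hJ : ∀ j ∈ J, ∃ v ∈ I ∩ J, v ≤ j)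
    (hV : (I ∩ J).Nonempty) :
    ((gapPairs I J).filter (·.1 ∈ I ∩ J)).card = (J.erase ((I ∩ J).min' hV)).card := by
  refine Finset.card_bij (fun a _ => a.2) ?_ ?_ ?_
  · intro a ha
    obtain ⟨ha, haV⟩ := Finset.mem_filter.mp ha
    obtain ⟨-, hj, hlt, -⟩ := mem_gapPairs.mp ha
    exact Finset.mem_erase.mpr ⟨(lt_of_le_of_lt (Finset.min'_le _ _ haV) hlt).ne', hj⟩
  · intro a ha b hb h
    obtain ⟨ha, haV⟩ := Finset.mem_filter.mp ha
    obtain ⟨hb, hbV⟩ := Finset.mem_filter.mp hb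
    exact Prod.ext (gapPairs_fst_eq ha hb haV hbV h) h
  · intro j hj
    obtain ⟨hj1, hj⟩ := Finset.mem_erase.mp hj
    obtain ⟨v, hv, hvj⟩ := hJ j hj
    have hbelow : ((I ∩ J).filter (· < j)).Nonempty :=
      ⟨_, Finset.mem_filter.mpr ⟨Finset.min'_mem _ hV,
        lt_of_le_of_ne ((Finset.min'_le _ _ hv).trans hvj) (Ne.symm hj1)⟩⟩
    obtain ⟨huV, huj⟩ := Finset.mem_filter.mp (Finset.max'_mem _ hbelow)
    refine ⟨(_, j), Finset.mem_filter.mpr ⟨mem_gapPairs.mpr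
      ⟨(Finset.mem_inter.mp huV).1, hj, huj, fun v hv ⟨huv, hvj⟩ => ?_⟩, huV⟩, rfl⟩
    exact not_le.mpr huv (Finset.le_max' _ _ (Finset.mem_filter.mpr ⟨hv, hvj⟩))

lemma card_gapPairs_filter_fst_not_mem
    (hIJ : ∀ i ∈ I, ∀ j ∈ J, i < j → ∃ v ∈ I ∩ J, i ≤ v ∧ v ≤ j)
    (hI : ∀ i ∈ I, ∃ v ∈ I ∩ J, i ≤ v) :
    ((gapPairs I J).filter (·.1 ∉ I ∩ J)).card = (I \ J).card := by
  refine Finset.card_bij (fun a _ => a.1) ?_ ?_ ?_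
  · intro a ha
    obtain ⟨ha, haV⟩ := Finset.mem_filter.mp ha
    have hi := (mem_gapPairs.mp ha).1
    exact Finset.mem_sdiff.mpr ⟨hi, fun hj => haV (Finset.mem_inter.mpr ⟨hi, hj⟩)⟩
  · intro a ha b hb h
    obtain ⟨ha, haV⟩ := Finset.mem_filter.mp ha
    obtain ⟨hb, hbV⟩ := Finset.mem_filter.mp hb
    exact Prod.ext h (gapPairs_snd_eq ha hb (snd_mem_of_fst_not_mem hIJ ha haV)
      (snd_mem_of_fst_not_mem hIJ hb hbV) h)
  · intro i hi
    obtain ⟨hiI, hiJ⟩ := Finset.mem_sdiff.mp hi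
    obtain ⟨v, hv, hiv⟩ := hI i hiI
    have habove : ((I ∩ J).filter (i < ·)).Nonempty :=
      ⟨v, Finset.mem_filter.mpr ⟨hv, lt_of_le_of_ne hiv
        fun h => hiJ (Finset.mem_inter.mp (h ▸ hv)).2⟩⟩
    obtain ⟨huV, hiu⟩ := Finset.mem_filter.mp (Finset.min'_mem _ habove)
    refine ⟨(i, _), Finset.mem_filter.mpr ⟨mem_gapPairs.mpr
      ⟨hiI, (Finset.mem_inter.mp huV).2, hiu, fun v hv ⟨hiv, hvu⟩ => ?_⟩,
        fun h => hiJ (Finset.mem_inter.mp h).2⟩, rfl⟩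
    exact not_le.mpr hvu (Finset.min'_le _ _ (Finset.mem_filter.mpr ⟨hv, hiv⟩))

theorem card_gapPairs
    (hIJ : ∀ i ∈ I, ∀ j ∈ J, i < j → ∃ v ∈ I ∩ J, i ≤ v ∧ v ≤ j)
    (hI : ∀ i ∈ I, ∃ v ∈ I ∩ J, i ≤ v) (hJ : ∀ j ∈ J, ∃ v ∈ I ∩ J, v ≤ j) :
    (gapPairs I J).card = (I ∪ J).card - 1 := by
  rcases (I ∩ J).eq_empty_or_nonempty with hV | hV
  · have hI : I = ∅ := Finset.eq_empty_of_forall_notMem fun i hi => by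
      obtain ⟨v, hv, -⟩ := hI i hi; simp [hV] at hv
    have hJ : J = ∅ := Finset.eq_empty_of_forall_notMem fun j hj => by
      obtain ⟨v, hv, -⟩ := hJ j hj; simp [hV] at hv
    simp [hI, hJ, gapPairs]
  rw [← Finset.card_filter_add_card_filter_not (·.1 ∈ I ∩ J),
    card_gapPairs_filter_fst_mem hJ hV, card_gapPairs_filter_fst_not_mem hIJ hI,
    Finset.card_erase_of_mem (Finset.mem_inter.mp (Finset.min'_mem _ hV)).2,
    ← Finset.card_sdiff_add_card]
  have := Finset.card_pos.mpr ⟨_, (Finset.mem_inter.mp (Finset.min'_mem _ hV)).2⟩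
  omega

end GapPairs

lemma exists_descent_of_lt {f : ℕ → Bool} {p q : ℕ} (hpq : p < q) (hp : f p = true)
    (hq : f q = false) : ∃ r, p ≤ r ∧ r < q ∧ f r = true ∧ f (r + 1) = false := by
  induction q with
  | zero => omega
  | succ q ih =>
    cases hfq : f q
    · have hpq : p < q := lt_of_le_of_ne (Nat.lt_succ_iff.mp hpq) fun h => by simp_all
      obtain ⟨r, hpr, hrq, hr⟩ := ih hpq hfq
      exact ⟨r, hpr, hrq.trans q.lt_succ_self, hr⟩
    · exact ⟨q, Nat.lt_succ_iff.mp hpq, q.lt_succ_self, hfq, hq⟩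

section CanonicalIndex

variable (w : List Bool)

lemma canonIdxAux_getD_succ (p : ℕ) (l : List Bool) (prev : Bool) (k : ℕ)
    (hp : p + 1 < l.length) :
    (canonIdxAux l prev k).getD (p + 1) 0 =
      if l.getD p false && !l.getD (p + 1) false then (canonIdxAux l prev k).getD p 0
      else (canonIdxAux l prev k).getD p 0 + 1 := by
  induction p generalizing l prev k with
  | zero =>
    match l with
    | c :: c' :: rest => cases prev <;> cases c <;> cases c' <;> simp [canonIdxAux]
  | succ p ih =>
    match l with
    | c :: rest =>
      rw [canonIdxAux]
      split <;> exact ih rest c _ (by simpa using hp)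

lemma idxAt_succ {p : ℕ} (hp : p + 1 < w.length) :
    idxAt w (p + 1) =
      if letterAt w p && !letterAt w (p + 1) then idxAt w p else idxAt w p + 1 :=
  canonIdxAux_getD_succ p w false 0 hp

lemma idxAt_le_succ {p : ℕ} (hp : p + 1 < w.length) : idxAt w p ≤ idxAt w (p + 1) := by
  rw [idxAt_succ w hp]; split <;> omega

lemma idxAt_mono {p q : ℕ} (hpq : p ≤ q) (hq : q < w.length) : idxAt w p ≤ idxAt w q := by
  induction q, hpq using Nat.le_induction with
  | base => exact le_rfl
  | succ q _ ih => exact (ih (by omega)).trans (idxAt_le_succ w hq)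

lemma lt_of_idxAt_lt {p q : ℕ} (hp : p < w.length) (h : idxAt w p < idxAt w q) : p < q :=
  not_le.mp fun hqp => (idxAt_mono w hqp hp).not_gt h

lemma idxAt_le_nIdx {p : ℕ} (hp : p < w.length) : idxAt w p ≤ nIdx w :=
  idxAt_mono w (by omega) (by omega)

end CanonicalIndex

section Valleys

variable (w : List Bool)

def IsValleyPos (r : ℕ) : Prop :=
  r + 1 < w.length ∧ letterAt w r = true ∧ letterAt w (r + 1) = false

variable {w}

lemma IsValleyPos.idxAt_succ {r : ℕ} (h : IsValleyPos w r) : idxAt w (r + 1) = idxAt w r := by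
  simp [FP.idxAt_succ w h.1, h.2.1, h.2.2]

lemma idxAt_lt_add_two {p : ℕ} (hp : p + 2 < w.length) : idxAt w p < idxAt w (p + 2) := by
  rw [idxAt_succ w hp, idxAt_succ w (by omega : p + 1 < w.length)]
  cases letterAt w p <;> cases letterAt w (p + 1) <;> cases letterAt w (p + 2) <;> simp

lemma isValleyPos_of_idxAt_eq {p q : ℕ} (hpq : p < q) (hq : q < w.length)
    (h : idxAt w p = idxAt w q) : q = p + 1 ∧ IsValleyPos w p := by
  obtain rfl : q = p + 1 := by
    by_contra hne
    exact (idxAt_lt_add_two (by omega : p + 2 < w.length)).not_ge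
      (h ▸ idxAt_mono w (by omega) hq)
  rw [idxAt_succ w hq] at h
  have hvalley : (letterAt w p && !letterAt w (p + 1)) = true := by
    by_contra hc
    rw [if_neg hc] at h
    omega
  exact ⟨rfl, hq, by simpa using hvalley⟩

lemma mem_Iset {i : ℕ} :
    i ∈ Iset w ↔ ∃ p < w.length, letterAt w p = true ∧ idxAt w p = i := by
  simp [Iset, and_assoc]

lemma mem_Jset {j : ℕ} :
    j ∈ Jset w ↔ ∃ q < w.length, letterAt w q = false ∧ idxAt w q = j := by
  simp [Jset, and_assoc]

lemma mem_Vset {v : ℕ} : v ∈ Vset w ↔ ∃ r, IsValleyPos w r ∧ idxAt w r = v := by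
  constructor
  · intro hv
    obtain ⟨⟨p, hp, hpE, rfl⟩, ⟨q, hq, hqN, hpq⟩⟩ := mem_Iset.and mem_Jset |>.mp
      (Finset.mem_inter.mp hv)
    rcases lt_trichotomy p q with hlt | rfl | hgt
    · exact ⟨p, (isValleyPos_of_idxAt_eq hlt hq hpq.symm).2, rfl⟩
    · simp_all
    · have := (isValleyPos_of_idxAt_eq hgt hp hpq).2.2.1
      simp_all
  · rintro ⟨r, hr, rfl⟩
    exact Finset.mem_inter.mpr ⟨mem_Iset.mpr ⟨r, by have := hr.1; omega, hr.2.1, rfl⟩,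
      mem_Jset.mpr ⟨r + 1, hr.1, hr.2.2, hr.idxAt_succ⟩⟩

lemma exists_valley_between {p q : ℕ} (hpq : p < q) (hq : q < w.length)
    (hpE : letterAt w p = true) (hqN : letterAt w q = false) :
    ∃ v ∈ Iset w ∩ Jset w, idxAt w p ≤ v ∧ v ≤ idxAt w q := by
  obtain ⟨r, hpr, hrq, hrE, hrN⟩ := exists_descent_of_lt (f := letterAt w) hpq hpE hqN
  have hr : IsValleyPos w r := ⟨by omega, hrE, hrN⟩
  exact ⟨idxAt w r, mem_Vset.mpr ⟨r, hr, rfl⟩, idxAt_mono w hpr (by omega),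
    hr.idxAt_succ ▸ idxAt_mono w hrq hq⟩

lemma exists_valley_mem_Icc {i j : ℕ} (hi : i ∈ Iset w) (hj : j ∈ Jset w) (hij : i < j) :
    ∃ v ∈ Iset w ∩ Jset w, i ≤ v ∧ v ≤ j := by
  obtain ⟨p, hp, hpE, rfl⟩ := mem_Iset.mp hi
  obtain ⟨q, hq, hqN, rfl⟩ := mem_Jset.mp hj
  exact exists_valley_between (lt_of_idxAt_lt w hp hij) hq hpE hqN

lemma exists_valley_le (h0 : letterAt w 0 = true) {j : ℕ} (hj : j ∈ Jset w) :
    ∃ v ∈ Iset w ∩ Jset w, v ≤ j := by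
  obtain ⟨q, hq, hqN, rfl⟩ := mem_Jset.mp hj
  have hq0 : 0 < q := Nat.pos_of_ne_zero (by rintro rfl; simp_all)
  obtain ⟨v, hv, -, hvq⟩ := exists_valley_between hq0 hq h0 hqN
  exact ⟨v, hv, hvq⟩

lemma exists_valley_ge (hlast : letterAt w (w.length - 1) = false) {i : ℕ} (hi : i ∈ Iset w) :
    ∃ v ∈ Iset w ∩ Jset w, i ≤ v := by
  obtain ⟨p, hp, hpE, rfl⟩ := mem_Iset.mp hi
  have hp' : p < w.length - 1 := lt_of_le_of_ne (by omega) (by rintro rfl; simp_all)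
  obtain ⟨v, hv, hpv, -⟩ := exists_valley_between hp' (by omega) hpE hlast
  exact ⟨v, hv, hpv⟩

lemma isNuEdgeB_iff_mem_gapPairs {i j : ℕ} (hij : i < j) :
    isNuEdgeB w i j = true ↔ (i, j) ∈ gapPairs (Iset w) (Jset w) := by
  simp only [isNuEdgeB, List.any_eq_true, List.all_eq_true, List.mem_range, Bool.and_eq_true,
    Bool.or_eq_true, Bool.not_eq_true', Bool.not_eq_false', decide_eq_true_eq,
    Bool.and_eq_false_imp, mem_gapPairs]
  constructor
  · rintro ⟨p, hp, q, hq, ⟨⟨⟨⟨hpq, hpE⟩, hqN⟩, rfl⟩, rfl⟩, hall⟩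
    refine ⟨mem_Iset.mpr ⟨p, hp, hpE, rfl⟩, mem_Jset.mpr ⟨q, hq, hqN, rfl⟩, hij, ?_⟩
    rintro v hv ⟨hpv, hvq⟩
    obtain ⟨r, hr, rfl⟩ := mem_Vset.mp hv
    have hpr : p < r := lt_of_idxAt_lt w (by have := hr.1; omega) hpv
    have hrq : r + 1 < q := lt_of_idxAt_lt w hr.1 (hr.idxAt_succ ▸ hvq)
    rcases hall r (by have := hr.1; omega) with (h | h) | h
    · exact Bool.false_ne_true (hr.2.2.symm.trans (h ⟨⟨hpr.le, hrq.le⟩, hr.2.1⟩))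
    · omega
    · omega
  · rintro ⟨hi, hj, -, hgap⟩
    obtain ⟨p, hp, hpE, rfl⟩ := mem_Iset.mp hi
    obtain ⟨q, hq, hqN, rfl⟩ := mem_Jset.mp hj
    refine ⟨p, hp, q, hq, ⟨⟨⟨⟨lt_of_idxAt_lt w hp hij, hpE⟩, hqN⟩, rfl⟩, rfl⟩, fun r hr => ?_⟩
    by_cases hval : p ≤ r ∧ r + 1 ≤ q ∧ IsValleyPos w r
    · obtain ⟨hpr, hrq, hvr⟩ := hval
      have hpr' := idxAt_mono w hpr hr
      have hrq' := hvr.idxAt_succ ▸ idxAt_mono w hrq hq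
      have := hgap _ (mem_Vset.mpr ⟨r, hvr, rfl⟩)
      omega
    · refine Or.inl (Or.inl fun ⟨⟨hpr, hrq⟩, hrE⟩ => ?_)
      by_contra hrN
      exact hval ⟨hpr, hrq, by omega, hrE, by simpa using hrN⟩

end Valleys

lemma length_nuEdgePairs (w : List Bool) :
    (nuEdgePairs w).length = (gapPairs (Iset w) (Jset w)).card := by
  have hpairs : nuEdgePairs w = (List.range (nIdx w + 1) ×ˢ List.range (nIdx w + 1)).filter
      fun a => decide (a.1 < a.2) && isNuEdgeB w a.1 a.2 := rfl
  have hnodup : (nuEdgePairs w).Nodup :=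
    hpairs ▸ (List.nodup_range.product List.nodup_range).filter _
  rw [← List.toFinset_card_of_nodup hnodup]
  congr 1
  ext ⟨i, j⟩
  simp only [hpairs, List.mem_toFinset, List.mem_filter, List.mem_product, List.mem_range,
    Bool.and_eq_true, decide_eq_true_eq]
  constructor
  · rintro ⟨-, hij, hedge⟩
    exact (isNuEdgeB_iff_mem_gapPairs hij).mp hedge
  · intro h
    obtain ⟨hi, hj, hij, -⟩ := mem_gapPairs.mp h
    obtain ⟨p, hp, -, rfl⟩ := mem_Iset.mp hi
    obtain ⟨q, hq, -, rfl⟩ := mem_Jset.mp hj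
    exact ⟨⟨Nat.lt_succ_of_le (idxAt_le_nIdx w hp), Nat.lt_succ_of_le (idxAt_le_nIdx w hq)⟩, hij,
      (isNuEdgeB_iff_mem_gapPairs hij).mpr h⟩

end FP

open FP in
/-- The ν-graph `G(ν)` has exactly `|I ∪ J| − 1` edges. -/
theorem stmt14 (ν : List Bool) :
    (nuEdgePairs (ovl ν)).length = (Iset (ovl ν) ∪ Jset (ovl ν)).card - 1 := by
  have hlast : letterAt (ovl ν) ((ovl ν).length - 1) = false := by
    simp [ovl, letterAt]
  rw [length_nuEdgePairs]
  exact card_gapPairs (fun _ hi _ hj hij => exists_valley_mem_Icc hi hj hij)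
    (fun _ => exists_valley_ge hlast) (fun _ => exists_valley_le rfl)
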